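/- Let n, l be positive integers, λ > 0, μ > 0, T ≥ 0 and W ≥ 0. Let M : [0,T] → (n×n real symmetric matrices) be differentiable, let 𝒜 : [0,T] → ℝ^{n×n}, ℬ : [0,T] → ℝ^{n×l}, let w : [0,T] → ℝ^l with ‖w(t)‖ ≤ W for all t ∈ [0,T], and let x : [0,T] → ℝ^n be differentiable with x'(t) = 𝒜(t)x(t) + ℬ(t)w(t) for all t ∈ [0,T]. Assume for every t ∈ [0,T] the block matrix [[M(t)𝒜(t) + 𝒜(t)ᵀM(t) + M'(t) + λM(t), M(t)ℬ(t)], [ℬ(t)ᵀM(t), −μI_l]] is negative semidefinite. Then the Lyapunov function V(t) := x(t)ᵀM(t)x(t) satisfies, for every t ∈ [0,T], V(t) ≤ e^{−λt}·V(0) + (μ/λ)·W²·(1 − e^{−λt}). -/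

import Mathlib

/-!
Along a trajectory `ẋ = 𝒜x + ℬw`, the quantity `V' + λV - μ wᵀw`, with
`V' = ẋᵀMx + xᵀM'x + xᵀMẋ`, is exactly the quadratic form of the block matrix at `(x, w)`.
Negative semidefiniteness therefore gives the differential dissipation inequality
`V' ≤ -λV + μW²`, and Grönwall's inequality integrates it.
-/

open Matrix Set

noncomputable def euclNorm {ι : Type*} [Fintype ι] (v : ι → ℝ) : ℝ := Real.sqrt (v ⬝ᵥ v)

section DotProductMulVec

variable {ι κ : Type*} [Fintype ι] [Fintype κ]

theorem HasDerivWithinAt.dotProduct_mulVec {s : Set ℝ} {t : ℝ}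
    {M : ℝ → Matrix ι ι ℝ} {M' : Matrix ι ι ℝ} {x : ℝ → ι → ℝ} {x' : ι → ℝ}
    (hx : HasDerivWithinAt x x' s t)
    (hM : ∀ i j, HasDerivWithinAt (fun s => M s i j) (M' i j) s t) :
    HasDerivWithinAt (fun s => x s ⬝ᵥ (M s *ᵥ x s))
      (x' ⬝ᵥ (M t *ᵥ x t) + x t ⬝ᵥ (M' *ᵥ x t) + x t ⬝ᵥ (M t *ᵥ x')) s t := by
  have hxi : ∀ i, HasDerivWithinAt (fun s => x s i) (x' i) s t := hasDerivWithinAt_pi.1 hx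
  have hsum : HasDerivWithinAt (fun s => ∑ i, ∑ j, x s i * (M s i j * x s j))
      (∑ i, ∑ j, (x' i * (M t i j * x t j) + x t i * (M' i j * x t j + M t i j * x' j))) s t :=
    .fun_sum fun i _ => .fun_sum fun j _ => (hxi i).mul ((hM i j).mul (hxi j))
  convert hsum using 1
  · funext s
    simp only [dotProduct, mulVec, Finset.mul_sum]
  · simp only [dotProduct, mulVec, Finset.mul_sum, Finset.sum_add_distrib, mul_add]
    ring

theorem sumElim_dotProduct_fromBlocks_mulVec_sumElim (A : Matrix ι ι ℝ) (B : Matrix ι κ ℝ)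
    (C : Matrix κ ι ℝ) (D : Matrix κ κ ℝ) (u : ι → ℝ) (v : κ → ℝ) :
    Sum.elim u v ⬝ᵥ (fromBlocks A B C D *ᵥ Sum.elim u v) =
      u ⬝ᵥ (A *ᵥ u) + u ⬝ᵥ (B *ᵥ v) + v ⬝ᵥ (C *ᵥ u) + v ⬝ᵥ (D *ᵥ v) := by
  rw [fromBlocks_mulVec, sumElim_dotProduct_sumElim, dotProduct_add, dotProduct_add,
    Sum.elim_comp_inl, Sum.elim_comp_inr]
  ring

theorem dissipation_of_posSemidef_neg_fromBlocks [DecidableEq κ] {M M' A : Matrix ι ι ℝ}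
    {B : Matrix ι κ ℝ} {lam mu : ℝ}
    (h : (-fromBlocks (M * A + Aᵀ * M + M' + lam • M) (M * B) (Bᵀ * M) (-(mu • 1))).PosSemidef)
    (u : ι → ℝ) (v : κ → ℝ) :
    (A *ᵥ u + B *ᵥ v) ⬝ᵥ (M *ᵥ u) + u ⬝ᵥ (M' *ᵥ u) + u ⬝ᵥ (M *ᵥ (A *ᵥ u + B *ᵥ v)) ≤
      -lam * (u ⬝ᵥ (M *ᵥ u)) + mu * (v ⬝ᵥ v) := by
  have hneg := h.dotProduct_mulVec_nonneg (Sum.elim u v)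
  rw [star_trivial, neg_mulVec, dotProduct_neg,
    sumElim_dotProduct_fromBlocks_mulVec_sumElim] at hneg
  simp only [add_mulVec, mulVec_add, smul_mulVec, neg_mulVec, one_mulVec, ← mulVec_mulVec,
    dotProduct_add, add_dotProduct, dotProduct_neg, dotProduct_smul, smul_eq_mul,
    dotProduct_mulVec _ (Aᵀ), dotProduct_mulVec _ (Bᵀ), vecMul_transpose] at hneg ⊢
  linarith

end DotProductMulVec

theorem le_gronwallBound_of_hasDerivWithinAt_Icc {f f' : ℝ → ℝ} {δ K ε a b : ℝ}
    (hf : ∀ x ∈ Icc a b, HasDerivWithinAt f (f' x) (Icc a b) x) (ha : f a ≤ δ)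
    (bound : ∀ x ∈ Ico a b, f' x ≤ K * f x + ε) :
    ∀ x ∈ Icc a b, f x ≤ gronwallBound δ K ε (x - a) :=
  le_gronwallBound_of_liminf_deriv_right_le (fun x hx => (hf x hx).continuousWithinAt)
    (fun x hx _ hr => ((hf x (Ico_subset_Icc_self hx)).mono_of_mem_nhdsWithin
      (Icc_mem_nhdsGE_of_mem hx)).liminf_right_slope_le hr) ha bound

theorem gronwall_dissipation_bound_general
    (n l : ℕ)
    (lam mu T W : ℝ) (hlam : 0 < lam) (hmu : 0 < mu)
    (M M' : ℝ → Matrix (Fin n) (Fin n) ℝ)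
    (hMderiv : ∀ t ∈ Set.Icc (0 : ℝ) T, ∀ i j,
      HasDerivWithinAt (fun s => M s i j) (M' t i j) (Set.Icc (0 : ℝ) T) t)
    (𝒜 : ℝ → Matrix (Fin n) (Fin n) ℝ) (ℬ : ℝ → Matrix (Fin n) (Fin l) ℝ)
    (w : ℝ → Fin l → ℝ) (hw : ∀ t ∈ Set.Icc (0 : ℝ) T, euclNorm (w t) ≤ W)
    (x : ℝ → Fin n → ℝ)
    (hx : ∀ t ∈ Set.Icc (0 : ℝ) T,
      HasDerivWithinAt x (𝒜 t *ᵥ x t + ℬ t *ᵥ w t) (Set.Icc (0 : ℝ) T) t)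
    (hineq : ∀ t ∈ Set.Icc (0 : ℝ) T,
      (-(Matrix.fromBlocks
          (M t * 𝒜 t + (𝒜 t)ᵀ * M t + M' t + lam • M t) (M t * ℬ t)
          ((ℬ t)ᵀ * M t) (-(mu • (1 : Matrix (Fin l) (Fin l) ℝ))))).PosSemidef) :
    ∀ t ∈ Set.Icc (0 : ℝ) T,
      x t ⬝ᵥ (M t *ᵥ x t) ≤
        Real.exp (-lam * t) * (x 0 ⬝ᵥ (M 0 *ᵥ x 0))
          + (mu / lam) * W ^ 2 * (1 - Real.exp (-lam * t)) := by
  have hV (t) (ht : t ∈ Icc 0 T) := (hx t ht).dotProduct_mulVec (hMderiv t ht)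
  have hdissipation (t) (ht : t ∈ Ico 0 T) :
      (𝒜 t *ᵥ x t + ℬ t *ᵥ w t) ⬝ᵥ (M t *ᵥ x t) + x t ⬝ᵥ (M' t *ᵥ x t)
        + x t ⬝ᵥ (M t *ᵥ (𝒜 t *ᵥ x t + ℬ t *ᵥ w t))
        ≤ -lam * (x t ⬝ᵥ (M t *ᵥ x t)) + mu * W ^ 2 := by
    have hwW : w t ⬝ᵥ w t ≤ W ^ 2 := (Real.sqrt_le_iff.1 (hw t (Ico_subset_Icc_self ht))).2
    exact (dissipation_of_posSemidef_neg_fromBlocks (hineq t (Ico_subset_Icc_self ht))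
      (x t) (w t)).trans (by gcongr)
  intro t ht
  have hbound := le_gronwallBound_of_hasDerivWithinAt_Icc hV le_rfl hdissipation t ht
  rw [gronwallBound_of_K_ne_0 (neg_ne_zero.2 hlam.ne'), sub_zero] at hbound
  convert hbound using 1
  field_simp
  ring

/-- Integrated (Grönwall) form of the dissipation inequality derived from the
first robust-CCM matrix inequality (Eq. (10) of the paper): along trajectories of
`x' = 𝒜x + ℬw` with `‖w‖ ≤ W`, the Lyapunov function `V(t) = x(t)ᵀM(t)x(t)`
satisfies `V(t) ≤ e^{-λt} V(0) + (μ/λ) W² (1 - e^{-λt})`. -/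
theorem gronwall_dissipation_bound
    (n l : ℕ) (hn : 0 < n) (hl : 0 < l)
    (lam mu T W : ℝ) (hlam : 0 < lam) (hmu : 0 < mu) (hT : 0 ≤ T) (hW : 0 ≤ W)
    (M M' : ℝ → Matrix (Fin n) (Fin n) ℝ)
    (hMsymm : ∀ t ∈ Set.Icc (0 : ℝ) T, (M t).IsSymm)
    (hMderiv : ∀ t ∈ Set.Icc (0 : ℝ) T, ∀ i j,
      HasDerivWithinAt (fun s => M s i j) (M' t i j) (Set.Icc (0 : ℝ) T) t)
    (𝒜 : ℝ → Matrix (Fin n) (Fin n) ℝ) (ℬ : ℝ → Matrix (Fin n) (Fin l) ℝ)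
    (w : ℝ → Fin l → ℝ) (hw : ∀ t ∈ Set.Icc (0 : ℝ) T, euclNorm (w t) ≤ W)
    (x : ℝ → Fin n → ℝ)
    (hx : ∀ t ∈ Set.Icc (0 : ℝ) T,
      HasDerivWithinAt x (𝒜 t *ᵥ x t + ℬ t *ᵥ w t) (Set.Icc (0 : ℝ) T) t)
    (hineq : ∀ t ∈ Set.Icc (0 : ℝ) T,
      (-(Matrix.fromBlocks
          (M t * 𝒜 t + (𝒜 t)ᵀ * M t + M' t + lam • M t) (M t * ℬ t)
          ((ℬ t)ᵀ * M t) (-(mu • (1 : Matrix (Fin l) (Fin l) ℝ))))).PosSemidef) :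
    ∀ t ∈ Set.Icc (0 : ℝ) T,
      x t ⬝ᵥ (M t *ᵥ x t) ≤
        Real.exp (-lam * t) * (x 0 ⬝ᵥ (M 0 *ᵥ x 0))
          + (mu / lam) * W ^ 2 * (1 - Real.exp (-lam * t)) :=
  gronwall_dissipation_bound_general n l lam mu T W hlam hmu M M' hMderiv 𝒜 ℬ w hw x hx hineq
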